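/- arXiv:1306.1750 — 2 statements merged into one kernel-verified Lean document; each statement's English description precedes it below -/
import Mathlib

section
/- For all x ≥ 0, 1 - W(-x, -1/2, 1) = erf(x/2), where erf(y) = (2/√π) ∫₀^y e^{-t²} dt. -/
open Real MeasureTheory

open Real

/-- The Wright function `W(z, α, β) = ∑_{n≥0} z^n / (n! Γ(αn + β))`
(with the convention `1/Γ = 0` at the poles of `Γ`). -/
noncomputable def wright (z α β : ℝ) : ℝ :=
  ∑' n : ℕ, z ^ n / ((Nat.factorial n : ℝ) * Real.Gamma (α * n + β))

/-- The Mainardi function `M_ν(z) = W(-z, -ν, 1-ν)`. -/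
noncomputable def mainardi (ν z : ℝ) : ℝ :=
  ∑' n : ℕ, (-z) ^ n / ((Nat.factorial n : ℝ) * Real.Gamma (-ν * n + 1 - ν))

/-- The Gauss error function `erf y = (2/√π) ∫₀^y e^{-t²} dt`. -/
noncomputable def erf (y : ℝ) : ℝ :=
  (2 / Real.sqrt π) * ∫ t in (0:ℝ)..y, Real.exp (-t ^ 2)



lemma gamma_half_sub (k : ℕ) :
    Real.Gamma (1/2 - k) = Real.sqrt π * (-4)^k * k.factorial / (2*k).factorial := by
  induction k with
  | zero =>
    have : (1/2 - (0:ℕ) : ℝ) = 1/2 := by norm_num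
    rw [this, Real.Gamma_one_half_eq]; norm_num
  | succ k ih =>
    have h0 : ((-1:ℝ)/2 - k) ≠ 0 := by
      have : (0:ℝ) ≤ (k:ℝ) := Nat.cast_nonneg k
      intro h; nlinarith
    have h1 : Real.Gamma ((-1/2 - k) + 1) = (-1/2 - k) * Real.Gamma (-1/2 - k) :=
      Real.Gamma_add_one h0
    have h2 : ((-1:ℝ)/2 - k) + 1 = 1/2 - k := by ring
    have h3 : (1/2 - ((k+1 : ℕ):ℝ) : ℝ) = -1/2 - k := by push_cast; ring
    rw [h3]
    rw [h2] at h1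
    have h4 : Real.Gamma (-1/2 - k) = Real.Gamma (1/2 - k) / (-1/2 - k) := by
      rw [h1, mul_div_cancel_left₀ _ h0]
    rw [h4, ih]
    have hf1 : ((2*(k+1)).factorial : ℝ) = (2*k+2) * (2*k+1) * (2*k).factorial := by
      have : 2*(k+1) = (2*k+1) + 1 := by ring
      rw [this, Nat.factorial_succ, Nat.factorial_succ]; push_cast; ring
    have hf2 : ((k+1).factorial : ℝ) = (k+1) * k.factorial := by
      rw [Nat.factorial_succ]; push_cast; ring
    have hfk : ((2*k).factorial : ℝ) ≠ 0 := Nat.cast_ne_zero.2 (Nat.factorial_ne_zero _)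
    rw [hf1, hf2]
    have h2k1 : (2*(k:ℝ)+1) ≠ 0 := by positivity
    have h2k2 : (2*(k:ℝ)+2) ≠ 0 := by positivity
    rw [div_div, div_eq_div_iff (mul_ne_zero hfk h0) (by positivity)]
    ring


lemma integral_exp_neg_sq_series (y : ℝ) (hy : 0 ≤ y) :
    ∫ t in (0:ℝ)..y, Real.exp (-t^2)
      = ∑' k : ℕ, (-1)^k * y^(2*k+1) / (k.factorial * (2*k+1)) := by
  have hexp : ∀ t : ℝ, Real.exp (-t^2) = ∑' k : ℕ, (-t^2)^k / (k.factorial : ℝ) := by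
    intro t
    rw [Real.exp_eq_exp_ℝ, NormedSpace.exp_eq_tsum_div]
  have hInt : ∀ k : ℕ, Integrable (fun t => (-t^2)^k / ((k.factorial : ℝ)))
      (volume.restrict (Set.Ioc (0:ℝ) y)) := by
    intro k
    have h : Continuous fun t : ℝ => (-t^2)^k / ((k.factorial : ℝ)) := by continuity
    exact h.integrableOn_Ioc
  have hval : ∀ k : ℕ, (∫ t in Set.Ioc (0:ℝ) y, (-t^2)^k / ((k.factorial : ℝ)))
      = (-1)^k * y^(2*k+1) / (k.factorial * (2*k+1)) := by
    intro k
    rw [← intervalIntegral.integral_of_le hy]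
    have h : ∀ t : ℝ, (-t^2)^k / ((k.factorial : ℝ)) = ((-1)^k / k.factorial) * t^(2*k) := by
      intro t; rw [neg_pow, pow_mul]; ring
    simp only [h]
    rw [intervalIntegral.integral_const_mul, integral_pow, zero_pow (by omega)]
    have hk : ((k.factorial : ℝ)) ≠ 0 := Nat.cast_ne_zero.2 (Nat.factorial_ne_zero _)
    have h2k : (2*(k:ℝ)+1) ≠ 0 := by positivity
    push_cast
    field_simp
    try ring
    try exact Or.inl trivial
  have hnorm : ∀ k : ℕ, (∫ t in Set.Ioc (0:ℝ) y, ‖(-t^2)^k / ((k.factorial : ℝ))‖)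
      = y^(2*k+1) / (k.factorial * (2*k+1)) := by
    intro k
    have h2 : ∀ t ∈ Set.Ioc (0:ℝ) y, ‖(-t^2)^k / ((k.factorial : ℝ))‖
        = t^(2*k) / k.factorial := by
      intro t _
      rw [norm_div, Real.norm_natCast, Real.norm_eq_abs, abs_pow, abs_neg,
        abs_of_nonneg (sq_nonneg t), ← pow_mul]
    rw [setIntegral_congr_fun measurableSet_Ioc h2, ← intervalIntegral.integral_of_le hy]
    simp only [div_eq_mul_inv]
    rw [intervalIntegral.integral_mul_const, integral_pow, zero_pow (by omega)]
    have hk : ((k.factorial : ℝ)) ≠ 0 := Nat.cast_ne_zero.2 (Nat.factorial_ne_zero _)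
    have h2k : (2*(k:ℝ)+1) ≠ 0 := by positivity
    push_cast
    field_simp
    try ring
    try exact Or.inl trivial
  have hsum : Summable fun k : ℕ =>
      (∫ t in Set.Ioc (0:ℝ) y, ‖(-t^2)^k / ((k.factorial : ℝ))‖) := by
    refine Summable.of_nonneg_of_le (f := fun k : ℕ => y * ((y^2)^k / k.factorial))
      (fun k => integral_nonneg fun t => norm_nonneg _) ?_
      ((Real.summable_pow_div_factorial (y^2)).mul_left y)
    intro k
    rw [hnorm k]
    have hk : (0:ℝ) < ((k.factorial : ℝ)) := by positivity
    have hle : (k.factorial : ℝ) ≤ (k.factorial : ℝ) * (2*(k:ℝ)+1) := by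
      nlinarith [Nat.cast_nonneg (α := ℝ) k]
    have h1 : y^(2*k+1) / ((k.factorial : ℝ) * (2*(k:ℝ)+1)) ≤ y^(2*k+1) / k.factorial := by
      apply div_le_div_of_nonneg_left (by positivity) hk hle
    have h2 : y^(2*k+1) = y * (y^2)^k := by
      rw [pow_add, pow_mul, pow_one]; ring
    calc y^(2*k+1) / ((k.factorial : ℝ) * (2*↑k+1)) ≤ y^(2*k+1) / k.factorial := h1
      _ = y * ((y^2)^k / k.factorial) := by rw [h2]; ring
  rw [intervalIntegral.integral_of_le hy]
  calc (∫ t in Set.Ioc (0:ℝ) y, Real.exp (-t^2))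
      = ∫ t in Set.Ioc (0:ℝ) y, ∑' k : ℕ, (-t^2)^k / (k.factorial : ℝ) := by
        exact setIntegral_congr_fun measurableSet_Ioc fun t _ => hexp t
    _ = ∑' k : ℕ, ∫ t in Set.Ioc (0:ℝ) y, (-t^2)^k / (k.factorial : ℝ) :=
        (MeasureTheory.integral_tsum_of_summable_integral_norm hInt hsum).symm
    _ = ∑' k : ℕ, (-1)^k * y^(2*k+1) / (k.factorial * (2*k+1)) := tsum_congr hval


open MeasureTheory in
theorem main_thm (x : ℝ) (hx : 0 ≤ x) :
    1 - (∑' n : ℕ, (-x) ^ n / ((Nat.factorial n : ℝ) * Real.Gamma (-(1/2) * n + 1)))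
      = (2 / Real.sqrt π) * ∫ t in (0:ℝ)..(x/2), Real.exp (-t ^ 2) := by
  set f : ℕ → ℝ :=
    fun n => (-x)^n / ((Nat.factorial n : ℝ) * Real.Gamma (-(1/2) * n + 1)) with hf
  set g : ℕ → ℝ :=
    fun k => (-1)^k * x^(2*k+1) / (Real.sqrt π * 4^k * k.factorial * (2*k+1)) with hg
  have hsπ : (0:ℝ) < Real.sqrt π := Real.sqrt_pos.2 Real.pi_pos
  have heven : ∀ k : ℕ, k ≠ 0 → f (2*k) = 0 := by
    intro k hk
    have hk1 : (1:ℕ) ≤ k := Nat.one_le_iff_ne_zero.2 hk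
    have harg : (-(1/2) * ((2*k : ℕ):ℝ) + 1) = -(((k-1 : ℕ)):ℝ) := by
      push_cast [hk1]
      ring
    have hz : Real.Gamma (-(1/2)*((2*k:ℕ):ℝ)+1) = 0 := by
      rw [harg]; exact Real.Gamma_neg_nat_eq_zero _
    show (-x)^(2*k) / (((2*k).factorial : ℝ) * Real.Gamma (-(1/2)*((2*k:ℕ):ℝ)+1)) = 0
    rw [hz, mul_zero, div_zero]
  have heven0 : f 0 = 1 := by
    simp [hf, Real.Gamma_one]
  have hsumeven : ∑' k : ℕ, f (2*k) = 1 := by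
    rw [tsum_eq_single 0 (fun k hk => heven k hk)]
    simpa using heven0
  have hodd : ∀ k : ℕ, f (2*k+1) = -g k := by
    intro k
    have harg : (-(1/2) * ((2*k+1 : ℕ):ℝ) + 1) = 1/2 - k := by
      push_cast; ring
    have hfac : (((2*k+1).factorial : ℕ) : ℝ) = (2*(k:ℝ)+1) * (2*k).factorial := by
      have : 2*k+1 = (2*k) + 1 := rfl
      rw [this, Nat.factorial_succ]; push_cast; ring
    have hnegx : (-x)^(2*k+1) = -(x^(2*k+1)) := Odd.neg_pow ⟨k, by ring⟩ x
    rw [hf, hg]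
    simp only
    rw [harg, gamma_half_sub, hfac, hnegx, neg_pow (4:ℝ)]
    have hfk : ((2*k).factorial : ℝ) ≠ 0 := Nat.cast_ne_zero.2 (Nat.factorial_ne_zero _)
    have hkk : ((k.factorial : ℕ) : ℝ) ≠ 0 := Nat.cast_ne_zero.2 (Nat.factorial_ne_zero _)
    have h2k1 : (2*(k:ℝ)+1) ≠ 0 := by positivity
    have h4k : ((4:ℝ))^k ≠ 0 := by positivity
    rcases Nat.even_or_odd k with hpar | hpar
    · rw [hpar.neg_one_pow]
      field_simp
    · rw [hpar.neg_one_pow]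
      field_simp
  have hgsum : Summable g := by
    apply Summable.of_abs
    have habs : ∀ k : ℕ, |g k| = x^(2*k+1) / (Real.sqrt π * 4^k * k.factorial * (2*k+1)) := by
      intro k
      rw [hg]
      simp only
      rw [abs_div, abs_mul, abs_pow, abs_neg, abs_one, one_pow, one_mul,
        abs_of_nonneg (pow_nonneg hx _), abs_of_pos (by positivity)]
    refine Summable.of_nonneg_of_le (f := fun k : ℕ => (x / Real.sqrt π) * ((x^2/4)^k / k.factorial))
      (fun k => abs_nonneg _) ?_
      ((Real.summable_pow_div_factorial (x^2/4)).mul_left _)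
    intro k
    rw [habs k]
    have hd : (0:ℝ) < Real.sqrt π * 4^k * k.factorial := by positivity
    have hle : Real.sqrt π * 4^k * (k.factorial:ℝ)
        ≤ Real.sqrt π * 4^k * k.factorial * (2*(k:ℝ)+1) := by
      nlinarith [Nat.cast_nonneg (α := ℝ) k]
    calc x^(2*k+1) / (Real.sqrt π * 4^k * (k.factorial:ℝ) * (2*↑k+1))
        ≤ x^(2*k+1) / (Real.sqrt π * 4^k * k.factorial) :=
          div_le_div_of_nonneg_left (by positivity) hd hle
      _ = (x / Real.sqrt π) * ((x^2/4)^k / k.factorial) := by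
          rw [div_pow, pow_add, pow_mul, pow_one]
          field_simp
  have hsodd : Summable (fun k => f (2*k+1)) := by
    simp only [hodd]
    exact hgsum.neg
  have hseven : Summable (fun k => f (2*k)) := by
    apply summable_of_ne_finset_zero (s := {0})
    intro k hk
    exact heven k (by simpa using hk)
  have hW : (∑' n : ℕ, f n) = 1 + -(∑' k : ℕ, g k) := by
    rw [← tsum_even_add_odd hseven hsodd, hsumeven, ← tsum_neg]
    congr 1
    exact tsum_congr hodd
  rw [hW, integral_exp_neg_sq_series (x/2) (by linarith), ← tsum_mul_left]
  have hterm : ∀ k : ℕ, 2 / Real.sqrt π * ((-1)^k * (x/2)^(2*k+1) / (k.factorial * (2*k+1)))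
      = g k := by
    intro k
    rw [hg]
    simp only
    have h2p : (2:ℝ)^(2*k+1) = 2 * 4^k := by
      rw [pow_add, pow_mul, pow_one]; norm_num [mul_comm]
    rw [div_pow, h2p]
    have hkk : ((k.factorial : ℕ) : ℝ) ≠ 0 := Nat.cast_ne_zero.2 (Nat.factorial_ne_zero _)
    have h2k1 : (2*(k:ℝ)+1) ≠ 0 := by positivity
    have h4k : ((4:ℝ))^k ≠ 0 := by positivity
    field_simp
  rw [tsum_congr hterm]
  ring

/-- For all `x ≥ 0`, `1 - W(-x, -1/2, 1) = erf (x/2)`. -/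
theorem one_sub_wright_eq_erf (x : ℝ) (hx : 0 ≤ x) :
    1 - wright (-x) (-(1/2)) 1 = erf (x / 2) := by
  rw [wright, erf]
  exact main_thm x hx
end

section
/- For each fixed x ≥ 0, lim_{α→1⁻} [1 - W(-x, -α/2, 1)] = erf(x/2), where W is the Wright function. -/
open Real

/-!
For `a ∈ [1/4, 1/2]` the reflection formula bounds `|1 / Γ(1 - a n)|` by `Γ(a n) ≤ 4 (⌊n/2⌋ + 1)!`.
This gives a summable majorant of the terms of `W(z, -a, 1)`, uniform in `a`, so `a ↦ W(z, -a, 1)`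
is continuous on `[1/4, 1/2]` and the limit is the value at `a = 1/2`. There the even terms vanish
except the first one, because `1 / Γ` vanishes at the nonpositive integers, and by
`Γ(k + 1/2) = (2k-1)‼ √π / 2^k` the odd terms are, up to the factor `-2/√π`, the termwise integrals
of the Taylor series of `exp (-t²)` over `[0, x/2]`.
-/

open Set MeasureTheory
open scoped Nat Interval

namespace Real

/-- At the poles of `Γ (1 - s)` both sides vanish, the right one through `π / 0 = 0` in
`Gamma_mul_Gamma_one_sub`. -/
lemma inv_Gamma_one_sub {s : ℝ} (hs : Gamma s ≠ 0) :
    (Gamma (1 - s))⁻¹ = Gamma s * sin (π * s) / π := by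
  rw [← mul_inv_cancel_left₀ hs (Gamma (1 - s))⁻¹, ← mul_inv, Gamma_mul_Gamma_one_sub, inv_div,
    mul_div_assoc]

lemma abs_inv_Gamma_one_sub_le {s : ℝ} (hs : 0 < s) : |(Gamma (1 - s))⁻¹| ≤ Gamma s / π := by
  have hΓ := Gamma_pos_of_pos hs
  rw [inv_Gamma_one_sub hΓ.ne', abs_div, abs_mul, abs_of_pos hΓ, abs_of_pos pi_pos]
  gcongr
  exact mul_le_of_le_one_right hΓ.le (abs_sin_le_one _)

lemma Gamma_le_factorial {t : ℝ} {n : ℕ} (h1 : 1 ≤ t) (h2 : t ≤ n + 1) : Gamma t ≤ n ! := by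
  have h := convexOn_Gamma.le_max_of_mem_Icc (mem_Ioi.2 one_pos)
    (mem_Ioi.2 (by positivity : (0:ℝ) < n + 1)) ⟨h1, h2⟩
  rwa [Gamma_one, Gamma_nat_eq_factorial, max_eq_right (by exact_mod_cast n.factorial_pos)] at h

lemma abs_inv_Gamma_one_sub_le_factorial {s : ℝ} {k : ℕ} (h1 : 1 / 4 ≤ s) (h2 : s ≤ k + 1) :
    |(Gamma (1 - s))⁻¹| ≤ 4 * (k + 1)! := by
  have hs : 0 < s := by linarith
  calc |(Gamma (1 - s))⁻¹| ≤ Gamma s / π := abs_inv_Gamma_one_sub_le hs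
    _ ≤ Gamma s := div_le_self (Gamma_pos_of_pos hs).le (by linarith [pi_gt_three])
    _ = Gamma (s + 1) / s := by rw [Gamma_add_one hs.ne', mul_div_cancel_left₀ _ hs.ne']
    _ ≤ (k + 1)! / (1 / 4) := by
      gcongr
      exact Gamma_le_factorial (by linarith) (by push_cast; linarith)
    _ = 4 * (k + 1)! := by ring

lemma continuous_inv_Gamma : Continuous fun s : ℝ => (Gamma s)⁻¹ := by
  have h : (fun s : ℝ => (Gamma s)⁻¹) = fun s : ℝ => ((Complex.Gamma s)⁻¹).re := by
    ext s
    rw [Complex.Gamma_ofReal, ← Complex.ofReal_inv, Complex.ofReal_re]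
  rw [h]
  exact Complex.continuous_re.comp
    (Complex.differentiable_one_div_Gamma.continuous.comp Complex.continuous_ofReal)

end Real

lemma Nat.factorial_div_two_mul_self_le (n : ℕ) : (n / 2)! * (n / 2)! ≤ n ! :=
  (Nat.le_of_dvd (Nat.factorial_pos _) (Nat.factorial_mul_factorial_dvd_factorial_add _ _)).trans
    (Nat.factorial_le (by omega))

lemma pow_div_factorial_mul_factorial_half_le {y : ℝ} (hy : 0 ≤ y) (n : ℕ) :
    y ^ n / n ! * (n / 2 + 1)! ≤ (1 + y) * (2 * (1 + y) ^ 2) ^ (n / 2) / (n / 2)! := by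
  set k := n / 2
  have hk : (k ! : ℝ) * k ! ≤ n ! := by exact_mod_cast Nat.factorial_div_two_mul_self_le n
  have hpow : y ^ n ≤ (1 + y) * ((1 + y) ^ 2) ^ k :=
    calc y ^ n ≤ (1 + y) ^ n := by gcongr; linarith
      _ ≤ (1 + y) ^ (2 * k + 1) := pow_le_pow_right₀ (by linarith) (by omega)
      _ = (1 + y) * ((1 + y) ^ 2) ^ k := by rw [pow_succ', pow_mul]
  have h2 : (k + 1 : ℝ) ≤ 2 ^ k := by exact_mod_cast Nat.lt_two_pow_self
  have hkf : (0 : ℝ) < k ! := by positivity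
  calc y ^ n / n ! * (k + 1)! = y ^ n * (k + 1) * k ! / n ! := by
        push_cast [Nat.factorial_succ]; ring
    _ ≤ y ^ n * (k + 1) * k ! / (k ! * k !) := by gcongr
    _ = y ^ n * (k + 1) / k ! := by field_simp
    _ ≤ (1 + y) * ((1 + y) ^ 2) ^ k * 2 ^ k / k ! := by gcongr
    _ = (1 + y) * (2 * (1 + y) ^ 2) ^ k / k ! := by rw [mul_pow]; ring

lemma summable_pow_half_div_factorial_half (y : ℝ) :
    Summable fun n : ℕ => y ^ (n / 2) / (n / 2)! := by
  have h := Real.summable_pow_div_factorial y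
  refine Summable.even_add_odd ?_ ?_ <;> simpa [Nat.mul_div_cancel_left, Nat.mul_add_div]

noncomputable def wrightTerm (z α β : ℝ) (n : ℕ) : ℝ := z ^ n / (n ! * Gamma (α * n + β))

lemma abs_wrightTerm_le (z : ℝ) {a : ℝ} (ha : a ∈ Icc (1 / 4) (1 / 2)) (n : ℕ) :
    |wrightTerm z (-a) 1 n| ≤ 4 * ((1 + |z|) * (2 * (1 + |z|) ^ 2) ^ (n / 2) / (n / 2)!) := by
  obtain ⟨ha1, ha2⟩ := ha
  rcases Nat.eq_zero_or_pos n with rfl | hn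
  · norm_num [wrightTerm]
    linarith [abs_nonneg z]
  have hn1 : (1 : ℝ) ≤ n := by exact_mod_cast hn
  have hn2 : (n : ℝ) ≤ 2 * (n / 2 : ℕ) + 1 := by exact_mod_cast (by omega : n ≤ 2 * (n / 2) + 1)
  have hΓ : |(Gamma (1 - a * n))⁻¹| ≤ 4 * (n / 2 + 1)! :=
    abs_inv_Gamma_one_sub_le_factorial (by nlinarith) (by nlinarith)
  calc |wrightTerm z (-a) 1 n| = |z| ^ n / n ! * |(Gamma (1 - a * n))⁻¹| := by
        rw [wrightTerm, neg_mul, neg_add_eq_sub, div_mul_eq_div_div, div_eq_mul_inv, abs_mul,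
          abs_div, abs_pow, Nat.abs_cast]
    _ ≤ |z| ^ n / n ! * (4 * (n / 2 + 1)!) := by gcongr
    _ = 4 * (|z| ^ n / n ! * (n / 2 + 1)!) := by ring
    _ ≤ _ := by gcongr; exact pow_div_factorial_mul_factorial_half_le (abs_nonneg z) n

lemma continuous_wrightTerm (z β : ℝ) (n : ℕ) : Continuous fun α => wrightTerm z α β n := by
  simp only [wrightTerm, div_mul_eq_div_div, div_eq_mul_inv (z ^ n / n !)]
  exact continuous_const.mul (continuous_inv_Gamma.comp (by fun_prop))

lemma continuousOn_wright_neg (z : ℝ) :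
    ContinuousOn (fun a => wright z (-a) 1) (Icc (1 / 4) (1 / 2)) := by
  have hu : Summable fun n : ℕ => 4 * ((1 + |z|) * (2 * (1 + |z|) ^ 2) ^ (n / 2) / (n / 2)!) := by
    simpa only [mul_div_assoc] using
      ((summable_pow_half_div_factorial_half _).mul_left (1 + |z|)).mul_left 4
  exact continuousOn_tsum
    (fun n => ((continuous_wrightTerm z 1 n).comp continuous_neg).continuousOn) hu
    fun n a ha => (Real.norm_eq_abs _).trans_le (abs_wrightTerm_le z ha n)

lemma hasSum_integral_exp_neg_sq (y : ℝ) :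
    HasSum (fun k : ℕ => (-1) ^ k * y ^ (2 * k + 1) / (k ! * (2 * k + 1)))
      (∫ t in (0 : ℝ)..y, exp (-t ^ 2)) := by
  have hintegral (k : ℕ) : ∫ t in (0 : ℝ)..y, (-t ^ 2) ^ k / k ! =
      (-1) ^ k * y ^ (2 * k + 1) / (k ! * (2 * k + 1)) := by
    have h : (fun t : ℝ => (-t ^ 2) ^ k / k !) = fun t => (-1 : ℝ) ^ k / k ! * t ^ (2 * k) := by
      ext t; rw [neg_pow, ← pow_mul]; ring
    rw [h, intervalIntegral.integral_const_mul, integral_pow]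
    push_cast
    field_simp
    ring
  have hbound (k : ℕ) : ∀ t ∈ Ι (0 : ℝ) y, ‖(-t ^ 2) ^ k / (k ! : ℝ)‖ ≤ (y ^ 2) ^ k / k ! := by
    intro t ht
    have hty : t ^ 2 ≤ y ^ 2 := by
      rcases le_total 0 y with hy | hy
      · rw [uIoc_of_le hy] at ht; nlinarith [ht.1, ht.2]
      · rw [uIoc_of_ge hy] at ht; nlinarith [ht.1, ht.2]
    rw [norm_div, norm_pow, norm_neg, Real.norm_of_nonneg (sq_nonneg t), RCLike.norm_natCast]
    gcongr
  simp_rw [← hintegral]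
  refine intervalIntegral.hasSum_integral_of_dominated_convergence (fun k _ => (y ^ 2) ^ k / k !)
    (fun k => (by fun_prop : Continuous _).aestronglyMeasurable)
    (fun k => ae_of_all _ (hbound k)) (ae_of_all _ fun _ _ => Real.summable_pow_div_factorial _)
    intervalIntegrable_const (ae_of_all _ fun t _ => ?_)
  rw [Real.exp_eq_exp_ℝ]
  exact NormedSpace.expSeries_div_hasSum_exp _

lemma wrightTerm_neg_half_two_mul (z : ℝ) (k : ℕ) :
    wrightTerm z (-(1 / 2)) 1 (2 * k) = if k = 0 then 1 else 0 := by
  rcases k with _ | k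
  · simp [wrightTerm]
  -- `Γ` vanishes at `-k`, so the junk value `z / 0 = 0` realises the convention `1 / Γ(-k) = 0`.
  · simp [wrightTerm, Gamma_neg_nat_eq_zero]

lemma wrightTerm_neg_half_two_mul_add_one (z : ℝ) (k : ℕ) :
    wrightTerm z (-(1 / 2)) 1 (2 * k + 1) =
      2 / √π * ((-1) ^ k * (z / 2) ^ (2 * k + 1) / (k ! * (2 * k + 1))) := by
  have harg : -(1 / 2) * ((2 * k + 1 : ℕ) : ℝ) + 1 = 1 - (k + 1 / 2) := by push_cast; ring
  have hsin : sin (π * (k + 1 / 2)) = (-1) ^ k := by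
    rw [show π * (k + 1 / 2) = π / 2 + k * π by ring, sin_add_nat_mul_pi, sin_pi_div_two, mul_one]
  have hfac : ((2 * k + 1)! : ℝ) = (2 * k + 1) * (2 * k - 1 : ℕ)‼ * (2 ^ k * k !) := by
    rw [Nat.factorial_eq_mul_doubleFactorial, Nat.doubleFactorial_two_mul,
      Nat.doubleFactorial_add_one]
    push_cast
    ring
  have hπ : √π ^ 2 = π := sq_sqrt pi_pos.le
  have hdf : (0 : ℝ) < (2 * k - 1 : ℕ)‼ := by exact_mod_cast Nat.doubleFactorial_pos _
  rw [wrightTerm, harg, div_mul_eq_div_div, div_eq_mul_inv _ (Gamma _),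
    inv_Gamma_one_sub (Gamma_pos_of_pos (by positivity)).ne', hsin, Gamma_nat_add_half, hfac,
    div_pow]
  field_simp
  rw [hπ]
  ring

lemma hasSum_wrightTerm_neg_half (x : ℝ) :
    HasSum (wrightTerm (-x) (-(1 / 2)) 1) (1 - erf (x / 2)) := by
  have heven : HasSum (fun k => wrightTerm (-x) (-(1 / 2)) 1 (2 * k)) 1 := by
    simpa only [wrightTerm_neg_half_two_mul] using hasSum_ite_eq 0 (1 : ℝ)
  have hodd : HasSum (fun k => wrightTerm (-x) (-(1 / 2)) 1 (2 * k + 1)) (-erf (x / 2)) := by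
    have hterm : (fun k => wrightTerm (-x) (-(1 / 2)) 1 (2 * k + 1)) = fun k : ℕ =>
        -(2 / √π) * ((-1) ^ k * (x / 2) ^ (2 * k + 1) / (k ! * (2 * k + 1))) := by
      ext k
      rw [wrightTerm_neg_half_two_mul_add_one, neg_div, Odd.neg_pow ⟨k, rfl⟩]
      ring
    rw [hterm, erf, ← neg_mul]
    exact (hasSum_integral_exp_neg_sq (x / 2)).mul_left _
  simpa only [sub_eq_add_neg] using heven.even_add_odd hodd

lemma wright_neg_neg_half (x : ℝ) : wright (-x) (-(1 / 2)) 1 = 1 - erf (x / 2) :=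
  (hasSum_wrightTerm_neg_half x).tsum_eq

theorem one_sub_wright_tendsto_erf_general (x : ℝ) :
    Filter.Tendsto (fun α : ℝ => 1 - wright (-x) (-(α / 2)) 1)
      (nhdsWithin 1 (Set.Iio 1)) (nhds (erf (x / 2))) := by
  have hhalf : MapsTo (fun α : ℝ => α / 2) (Icc (1 / 2) 1) (Icc (1 / 4) (1 / 2)) :=
    fun α hα => ⟨by linarith [hα.1], by linarith [hα.2]⟩
  have hcont : ContinuousWithinAt (fun α : ℝ => wright (-x) (-(α / 2)) 1) (Icc (1 / 2) 1) 1 :=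
    ContinuousWithinAt.comp (g := fun a => wright (-x) (-a) 1)
      (continuousOn_wright_neg (-x) _ (hhalf (right_mem_Icc.2 (by norm_num))))
      (continuous_id.div_const 2).continuousWithinAt hhalf
  have hlim := (hcont.mono_of_mem_nhdsWithin (Icc_mem_nhdsLT (by norm_num))).tendsto
  rw [wright_neg_neg_half] at hlim
  simpa using (tendsto_const_nhds (x := (1 : ℝ))).sub hlim

/-- For each fixed `x ≥ 0`, `1 - W(-x, -α/2, 1) → erf (x/2)` as `α → 1⁻`. -/
theorem one_sub_wright_tendsto_erf (x : ℝ) (hx : 0 ≤ x) :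
    Filter.Tendsto (fun α : ℝ => 1 - wright (-x) (-(α / 2)) 1)
      (nhdsWithin 1 (Set.Iio 1)) (nhds (erf (x / 2))) :=
  one_sub_wright_tendsto_erf_general x
end
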